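/- Let G be an isometric daisy graph of a Hamming graph H = H_{k_1,…,k_n} with respect to 0^n, where H is the smallest possible such Hamming graph. For every j ∈ {1,…,n} and every i ∈ {0,…,k_j−1}, the subgraph of G induced by W_i^j is (isomorphic, via deleting the j-th coordinate, to) a daisy graph of the Hamming graph H' = H_{k_1,…,k_{j-1},k_{j+1},…,k_n} with respect to 0^{n-1}. -/

import Mathlib

open SimpleGraph

namespace Daisy

variable {V : Type*}

/-- The interval `I_G(u,v)`: vertices lying on shortest `u,v`-paths. -/
def interval (G : SimpleGraph V) (u v : V) : Set V :=
  {x | G.dist u x + G.dist x v = G.dist u v}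

/-- The vertex set of the daisy graph of `G` with respect to the root `r`, generated by `X`. -/
def daisySet (G : SimpleGraph V) (r : V) (X : Set V) : Set V :=
  ⋃ v ∈ X, interval G r v

/-- The subgraph of `G` induced by `S` is an isometric subgraph of `G`. -/
def IsIsometricSubset (G : SimpleGraph V) (S : Set V) : Prop :=
  ∀ u v : S, (G.induce S).dist u v = G.dist u.1 v.1

/-- Some shortest `u,v`-path of `G` contains both `x` and `y`. -/
def OnShortestPath (G : SimpleGraph V) (u v x y : V) : Prop :=
  ∃ p : G.Walk u v, p.length = G.dist u v ∧ x ∈ p.support ∧ y ∈ p.support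

/-- Conditions 1 and 2 of the definition of a pseudo-median `(x,y,z)` of the triple `(u,v,w)`. -/
def PseudoMedianConds (G : SimpleGraph V) (u v w x y z : V) : Prop :=
  OnShortestPath G u v x y ∧ OnShortestPath G v w y z ∧ OnShortestPath G u w x z ∧
  G.dist x y = G.dist y z ∧ G.dist y z = G.dist x z

/-- `(x,y,z)` is a pseudo-median of the triple `(u,v,w)` in `G`:
it satisfies the path and equidistance conditions, and `d(x,y)` is minimal under them. -/
def IsPseudoMedian (G : SimpleGraph V) (u v w x y z : V) : Prop :=
  PseudoMedianConds G u v w x y z ∧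
  ∀ x' y' z' : V, PseudoMedianConds G u v w x' y' z' → G.dist x y ≤ G.dist x' y'

/-- The triple `(u,v,w)` has a pseudo-median of size `s` in `G`. -/
def HasPseudoMedianOfSize (G : SimpleGraph V) (u v w : V) (s : ℕ) : Prop :=
  ∃ x y z : V, IsPseudoMedian G u v w x y z ∧ G.dist x y = s

/-- The Hamming graph with factors `K_{k i}`: vertices are tuples, two vertices being
adjacent iff they differ in exactly one coordinate. -/
def hammingGraph {ι : Type*} (k : ι → ℕ) : SimpleGraph (∀ i, Fin (k i)) where
  Adj u v := ∃! i, u i ≠ v i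
  symm := by
    constructor
    rintro u v ⟨i, hi, hu⟩
    exact ⟨i, Ne.symm hi, fun j hj => hu j (Ne.symm hj)⟩
  loopless := by
    constructor
    rintro u ⟨i, hi, -⟩
    exact hi rfl

/-- The all-zeros vertex `0^n` of a Hamming graph. -/
def hroot {ι : Type*} (k : ι → ℕ) (hk : ∀ i, 0 < k i) : ∀ i, Fin (k i) :=
  fun i => ⟨0, hk i⟩

/-- `S` is the vertex set of a daisy graph of `G` with respect to the root `r`. -/
def IsDaisySet (G : SimpleGraph V) (r : V) (S : Set V) : Prop :=
  ∃ X : Set V, S = daisySet G r X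

/-- `G` is (isomorphic to) an isometric daisy graph of `H` with respect to the root `r`. -/
def IsIsometricDaisyGraphOf {U : Type*} (G : SimpleGraph U) (H : SimpleGraph V) (r : V) : Prop :=
  ∃ S : Set V, IsDaisySet H r S ∧ IsIsometricSubset H S ∧ Nonempty (G ≃g H.induce S)

/-- `G` is not an isometric daisy graph (w.r.t. the all-zeros root) of any Hamming graph
with fewer vertices than `hammingGraph k`. -/
def SmallestSuch {U : Type*} (G : SimpleGraph U) {n : ℕ} (k : Fin n → ℕ) : Prop :=
  ∀ (m : ℕ) (k' : Fin m → ℕ) (hk' : ∀ i, 0 < k' i),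
    Fintype.card (∀ i, Fin (k' i)) < Fintype.card (∀ i, Fin (k i)) →
    ¬ IsIsometricDaisyGraphOf G (hammingGraph k') (hroot k' hk')

/-! In a Hamming graph the interval `I(r, v)` consists of the vertices agreeing in every
coordinate with `r` or with `v`, so the daisy sets rooted at `r` are the sets closed under this
coordinatewise operation. Such closedness survives fixing the `j`-th coordinate and deleting it,
and on a fiber `{u | u j = i}` deleting the `j`-th coordinate preserves adjacency. -/

lemma mem_interval_right (G : SimpleGraph V) (r v : V) : v ∈ interval G r v := by
  simp [interval]

lemma interval_subset_interval {G : SimpleGraph V} (hG : G.Preconnected) {r v w : V}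
    (hv : v ∈ interval G r w) : interval G r v ⊆ interval G r w := by
  intro x hx
  have hrw : G.dist r w ≤ G.dist r x + G.dist x w := (hG r x).dist_triangle_left w
  have hxw : G.dist x w ≤ G.dist x v + G.dist v w := (hG x v).dist_triangle_left w
  simp only [interval, Set.mem_ofPred_eq] at hx hv ⊢
  omega

lemma isDaisySet_iff_interval_subset {G : SimpleGraph V} (hG : G.Preconnected) {r : V}
    {S : Set V} : IsDaisySet G r S ↔ ∀ v ∈ S, interval G r v ⊆ S := by
  constructor
  · rintro ⟨X, rfl⟩ v hv
    simp only [daisySet, Set.mem_iUnion] at hv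
    obtain ⟨w, hw, hvw⟩ := hv
    exact (interval_subset_interval hG hvw).trans (Set.subset_biUnion_of_mem hw)
  · intro hS
    exact ⟨S, (Set.iUnion₂_subset hS).antisymm' fun v hv =>
      Set.mem_biUnion hv (mem_interval_right G r v)⟩

section Hamming

variable {ι : Type*} {k : ι → ℕ}

lemma hammingGraph_adj_restrict_iff {j : ι} {u v : ∀ l, Fin (k l)} (huv : u j = v j) :
    (hammingGraph fun l : {l // l ≠ j} => k l).Adj (fun l => u l) (fun l => v l) ↔
      (hammingGraph k).Adj u v := by
  constructor
  · rintro ⟨l, hl, huniq⟩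
    refine ⟨l, hl, fun m hm => ?_⟩
    have hmj : m ≠ j := fun h => hm (h ▸ huv)
    exact congrArg Subtype.val (huniq ⟨m, hmj⟩ hm)
  · rintro ⟨l, hl, huniq⟩
    have hlj : l ≠ j := fun h => hl (h ▸ huv)
    exact ⟨⟨l, hlj⟩, hl, fun m hm => Subtype.ext (huniq m hm)⟩

lemma hammingGraph_adj_update [DecidableEq ι] {u : ∀ l, Fin (k l)} {l : ι} {a : Fin (k l)}
    (ha : u l ≠ a) : (hammingGraph k).Adj u (Function.update u l a) :=
  ⟨l, by simpa using ha, fun m hm => by_contra fun hml => hm (by simp [hml])⟩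

variable [Fintype ι]

lemma hammingGraph_adj_iff {u v : ∀ l, Fin (k l)} :
    (hammingGraph k).Adj u v ↔ hammingDist u v = 1 := by
  simp only [hammingGraph, hammingDist, Finset.card_eq_one, Finset.eq_singleton_iff_unique_mem,
    Finset.mem_filter, Finset.mem_univ, true_and, ExistsUnique]

lemma hammingDist_le_length {u v : ∀ l, Fin (k l)} (p : (hammingGraph k).Walk u v) :
    hammingDist u v ≤ p.length := by
  induction p with
  | nil => simp
  | @cons a b c h q ih =>
    have hab : hammingDist a b = 1 := hammingGraph_adj_iff.1 h
    have := hammingDist_triangle a b c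
    rw [SimpleGraph.Walk.length_cons]
    omega

variable [DecidableEq ι]

lemma hammingDist_update_add_one {u v : ∀ l, Fin (k l)} {l : ι} (hl : u l ≠ v l) :
    hammingDist (Function.update u l (v l)) v + 1 = hammingDist u v := by
  have hfilter : ({x | Function.update u l (v l) x ≠ v x} : Finset ι) =
      ({x | u x ≠ v x} : Finset ι).erase l := by
    ext x
    by_cases hx : x = l <;> simp [hx]
  rw [hammingDist, hammingDist, hfilter, Finset.card_erase_add_one (by simpa using hl)]

lemma exists_walk_length_eq_hammingDist (u v : ∀ l, Fin (k l)) :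
    ∃ p : (hammingGraph k).Walk u v, p.length = hammingDist u v := by
  induction h : hammingDist u v generalizing u with
  | zero =>
    obtain rfl := hammingDist_eq_zero.1 h
    exact ⟨.nil, rfl⟩
  | succ m ih =>
    obtain ⟨l, hl⟩ := Function.ne_iff.1 (hammingDist_ne_zero.1 (by omega) : u ≠ v)
    have hd := hammingDist_update_add_one hl
    obtain ⟨p, hp⟩ := ih _ (by omega : hammingDist (Function.update u l (v l)) v = m)
    exact ⟨.cons (hammingGraph_adj_update hl) p, by simp [hp]⟩

lemma hammingGraph_preconnected : (hammingGraph k).Preconnected := fun u v =>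
  ⟨(exists_walk_length_eq_hammingDist u v).choose⟩

lemma hammingGraph_dist (u v : ∀ l, Fin (k l)) :
    (hammingGraph k).dist u v = hammingDist u v := by
  obtain ⟨p, hp⟩ := exists_walk_length_eq_hammingDist u v
  obtain ⟨q, hq⟩ := (hammingGraph_preconnected u v).exists_walk_length_eq_dist
  exact le_antisymm (hp ▸ dist_le p) (hq ▸ hammingDist_le_length q)

omit [DecidableEq ι] in
lemma hammingDist_add_hammingDist_eq_iff {β : ι → Type*} [∀ l, DecidableEq (β l)]
    {x y z : ∀ l, β l} :
    hammingDist x y + hammingDist y z = hammingDist x z ↔ ∀ l, y l = x l ∨ y l = z l := by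
  have hle : ∀ l ∈ Finset.univ, (if x l ≠ z l then 1 else 0) ≤
      (if x l ≠ y l then 1 else 0) + (if y l ≠ z l then 1 else 0) := by
    intro l _
    split_ifs <;> simp_all
  rw [eq_comm]
  simp only [hammingDist, Finset.card_filter, ← Finset.sum_add_distrib]
  rw [Finset.sum_eq_sum_iff_of_le hle]
  refine forall_congr' fun l => ?_
  simp only [Finset.mem_univ, true_implies]
  split_ifs <;> grind

lemma mem_interval_hammingGraph_iff {r v x : ∀ l, Fin (k l)} :
    x ∈ interval (hammingGraph k) r v ↔ ∀ l, x l = r l ∨ x l = v l := by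
  simp only [interval, Set.mem_ofPred_eq, hammingGraph_dist, hammingDist_add_hammingDist_eq_iff]

end Hamming

section Fiber

variable {ι : Type*} {k : ι → ℕ}

abbrev fiberImage (S : Set (∀ l, Fin (k l))) (j : ι) (i : Fin (k j)) :
    Set (∀ l : {l // l ≠ j}, Fin (k l)) :=
  (fun u l => u l.1) '' {u ∈ S | u j = i}

lemma injOn_restrict_fiber (S : Set (∀ l, Fin (k l))) (j : ι) (i : Fin (k j)) :
    Set.InjOn (fun u l => u (l : {l // l ≠ j}).1) {u ∈ S | u j = i} := by
  rintro u ⟨-, hu⟩ v ⟨-, hv⟩ huv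
  funext l
  by_cases hl : l = j
  · subst hl
    exact hu.trans hv.symm
  · exact congrFun huv ⟨l, hl⟩

noncomputable def fiberIso (S : Set (∀ l, Fin (k l))) (j : ι) (i : Fin (k j)) :
    (hammingGraph k).induce {u ∈ S | u j = i} ≃g
      (hammingGraph fun l : {l // l ≠ j} => k l).induce (fiberImage S j i) where
  toEquiv := Equiv.Set.imageOfInjOn _ _ (injOn_restrict_fiber S j i)
  map_rel_iff' {u v} := hammingGraph_adj_restrict_iff (u.2.2.trans v.2.2.symm)

lemma isDaisySet_fiberImage [Fintype ι] [DecidableEq ι] {r : ∀ l, Fin (k l)}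
    {S : Set (∀ l, Fin (k l))}
    (hS : IsDaisySet (hammingGraph k) r S) (j : ι) (i : Fin (k j)) :
    IsDaisySet (hammingGraph fun l : {l // l ≠ j} => k l) (fun l => r l) (fiberImage S j i) := by
  rw [isDaisySet_iff_interval_subset hammingGraph_preconnected] at hS ⊢
  rintro _ ⟨u, ⟨huS, rfl⟩, rfl⟩ y hy
  rw [mem_interval_hammingGraph_iff] at hy
  refine ⟨(Equiv.piSplitAt j _).symm (u j, y), ⟨hS u huS ?_, by simp⟩, ?_⟩
  · rw [mem_interval_hammingGraph_iff]
    intro l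
    by_cases hl : l = j
    · subst hl; simp
    · simpa [hl] using hy ⟨l, hl⟩
  · funext l
    simp [l.2]

end Fiber

theorem W_induces_daisy_graph_general
    (n : ℕ) (k : Fin n → ℕ) (hk : ∀ i, 0 < k i)
    (S : Set (∀ i, Fin (k i)))
    (hdaisy : IsDaisySet (hammingGraph k) (hroot k hk) S)
    (j : Fin n) (i : Fin (k j)) :
    IsDaisySet (hammingGraph (fun l : {l : Fin n // l ≠ j} => k l.1))
        (fun l : {l : Fin n // l ≠ j} => (⟨0, hk l.1⟩ : Fin (k l.1)))
        ((fun (u : ∀ i, Fin (k i)) (l : {l : Fin n // l ≠ j}) => u l.1) ''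
          {u ∈ S | u j = i}) ∧
      ∃ φ : ((hammingGraph k).induce {u ∈ S | u j = i}) ≃g
          ((hammingGraph (fun l : {l : Fin n // l ≠ j} => k l.1)).induce
            ((fun (u : ∀ i, Fin (k i)) (l : {l : Fin n // l ≠ j}) => u l.1) ''
              {u ∈ S | u j = i})),
        ∀ x, (φ x).1 = fun l : {l : Fin n // l ≠ j} => x.1 l.1 :=
  ⟨isDaisySet_fiberImage hdaisy j i, fiberIso S j i, fun _ => rfl⟩

/-- Let `G` (with vertex set `S`) be an isometric daisy graph of a Hamming
graph w.r.t. `0^n`, smallest possible. For every `j` and `i`, the subgraph of `G` induced by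
`W_i^j` is, via deleting the `j`-th coordinate, (isomorphic to) a daisy graph of the Hamming
graph on the remaining factors with respect to `0^{n-1}`. -/
theorem W_induces_daisy_graph
    (n : ℕ) (k : Fin n → ℕ) (hk : ∀ i, 0 < k i)
    (S : Set (∀ i, Fin (k i)))
    (hdaisy : IsDaisySet (hammingGraph k) (hroot k hk) S)
    (hisom : IsIsometricSubset (hammingGraph k) S)
    (hmin : SmallestSuch ((hammingGraph k).induce S) k)
    (j : Fin n) (i : Fin (k j)) :
    IsDaisySet (hammingGraph (fun l : {l : Fin n // l ≠ j} => k l.1))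
        (fun l : {l : Fin n // l ≠ j} => (⟨0, hk l.1⟩ : Fin (k l.1)))
        ((fun (u : ∀ i, Fin (k i)) (l : {l : Fin n // l ≠ j}) => u l.1) ''
          {u ∈ S | u j = i}) ∧
      ∃ φ : ((hammingGraph k).induce {u ∈ S | u j = i}) ≃g
          ((hammingGraph (fun l : {l : Fin n // l ≠ j} => k l.1)).induce
            ((fun (u : ∀ i, Fin (k i)) (l : {l : Fin n // l ≠ j}) => u l.1) ''
              {u ∈ S | u j = i})),
        ∀ x, (φ x).1 = fun l : {l : Fin n // l ≠ j} => x.1 l.1 :=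
  W_induces_daisy_graph_general n k hk S hdaisy j i

end Daisy
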